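/- Let T and Z be finite nonempty types, let q be a positive probability vector on T, let P : Z → T → ℝ be such that P z is a positive probability vector on T for every z, and let β > 0. Then ⨅ (r : T → ℝ), ⨆ (p' : positive probability vector on T), (∑ t, p' t * r t − (⨆ z, ∑ t, P z t * r t) − β * ∑ t, p' t * Real.log (p' t / q t)) = −β * ⨆ z, ∑ t, P z t * Real.log (P z t / q t). That is, the skill-based min–max fine-tuning objective, minimized over reward functions and maximized over fine-tuned distributions, equals −β times the maximal KL divergence of a skill-conditioned trajectory distribution from the reference q. (Core min–max identity for the cross-embodiment skill-based adaptation objective, Appendix A.3.) -/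

import Mathlib

/-!
For a fixed reward `r`, taking `p' = P z` for a skill `z` maximising `∑ t, P z t * r t` makes the
reward terms cancel, so the inner supremum is at least `-β * KL(P z ‖ q)`, hence at least `-β`
times the largest divergence. Conversely, for the reward `r = β * log (P z₀ / q)` of a skill `z₀`
of largest divergence, the objective at `p'` is at most `-β * KL(p' ‖ P z₀) - β * KL(P z₀ ‖ q)`,
and Gibbs' inequality `KL(p' ‖ P z₀) ≥ 0` closes the gap.
-/

open Finset Real

section Gibbs

variable {ι : Type*} [Fintype ι]

theorem sum_sub_sum_le_sum_mul_log_div (p a : ι → ℝ) (hp : ∀ i, 0 ≤ p i) (ha : ∀ i, 0 < a i) :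
    ∑ i, p i - ∑ i, a i ≤ ∑ i, p i * log (p i / a i) := by
  rw [← sum_sub_distrib]
  refine sum_le_sum fun i _ => ?_
  rcases (hp i).eq_or_lt with hpi | hpi
  · simp [← hpi, (ha i).le]
  · have hlog := log_le_sub_one_of_pos (div_pos (ha i) hpi)
    rw [← inv_div, log_inv]
    calc p i - a i = -(p i * (a i / p i - 1)) := by field_simp; ring
      _ ≤ p i * -log (a i / p i) := by nlinarith

theorem sum_mul_log_div_nonneg (p a : ι → ℝ) (hp : ∀ i, 0 ≤ p i) (ha : ∀ i, 0 < a i)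
    (hpa : ∑ i, p i = ∑ i, a i) : 0 ≤ ∑ i, p i * log (p i / a i) := by
  simpa [hpa] using sum_sub_sum_le_sum_mul_log_div p a hp ha

theorem sum_mul_log_div_sub_sum_mul_log_div (p a b : ι → ℝ) (hp : ∀ i, 0 < p i)
    (ha : ∀ i, 0 < a i) (hb : ∀ i, 0 < b i) :
    ∑ i, p i * log (a i / b i) - ∑ i, p i * log (p i / b i)
      = -∑ i, p i * log (p i / a i) := by
  rw [← sum_sub_distrib, ← sum_neg_distrib]
  refine sum_congr rfl fun i _ => ?_
  rw [log_div (ha i).ne' (hb i).ne', log_div (hp i).ne' (hb i).ne',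
    log_div (hp i).ne' (ha i).ne']
  ring

end Gibbs

abbrev PosProbVec (T : Type*) [Fintype T] : Type _ :=
  {f : T → ℝ // (∀ t, 0 < f t) ∧ ∑ t, f t = 1}

section Objective

variable {T Z : Type*} [Fintype T]

noncomputable def skillObjective (q : T → ℝ) (P : Z → T → ℝ) (β : ℝ) (r p : T → ℝ) : ℝ :=
  ∑ t, p t * r t - (⨆ z, ∑ t, P z t * r t) - β * ∑ t, p t * log (p t / q t)

variable {q : T → ℝ} {P : Z → T → ℝ} {β : ℝ}

theorem bddAbove_range_skillObjective (hq : ∀ t, 0 < q t) (hβ : 0 ≤ β) (r : T → ℝ) :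
    BddAbove (Set.range fun p : PosProbVec T => skillObjective q P β r p) := by
  refine ⟨(⨆ t, r t) - (⨆ z, ∑ t, P z t * r t) + β * (∑ t, q t - 1), ?_⟩
  rintro _ ⟨⟨p, hp, hps⟩, rfl⟩
  have hreward : ∑ t, p t * r t ≤ ⨆ t, r t :=
    calc ∑ t, p t * r t ≤ ∑ t, p t * ⨆ t', r t' :=
          sum_le_sum fun t _ =>
            mul_le_mul_of_nonneg_left (le_ciSup (Set.finite_range r).bddAbove t) (hp t).le
      _ = ⨆ t, r t := by rw [← sum_mul, hps, one_mul]
  have hkl := mul_le_mul_of_nonneg_left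
    (sum_sub_sum_le_sum_mul_log_div p q (fun t => (hp t).le) hq) hβ
  rw [hps] at hkl
  simp only [skillObjective]
  linarith

theorem neg_mul_sup_kl_le_sup_skillObjective [Fintype Z] [Nonempty Z] (hq : ∀ t, 0 < q t)
    (hP : ∀ z t, 0 < P z t) (hPs : ∀ z, ∑ t, P z t = 1) (hβ : 0 ≤ β) (r : T → ℝ) :
    -β * ⨆ z, ∑ t, P z t * log (P z t / q t)
      ≤ ⨆ p : PosProbVec T, skillObjective q P β r p := by
  obtain ⟨z, hz⟩ := exists_eq_ciSup_of_finite (f := fun z => ∑ t, P z t * r t)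
  refine le_ciSup_of_le (bddAbove_range_skillObjective hq hβ r) ⟨P z, hP z, hPs z⟩ ?_
  have hkl : ∑ t, P z t * log (P z t / q t) ≤ ⨆ z, ∑ t, P z t * log (P z t / q t) :=
    le_ciSup (f := fun z => ∑ t, P z t * log (P z t / q t)) (Set.finite_range _).bddAbove z
  simp only [skillObjective, ← hz]
  nlinarith

theorem skillObjective_log_ratio_le [Fintype Z] (hq : ∀ t, 0 < q t) (hP : ∀ z t, 0 < P z t)
    (hPs : ∀ z, ∑ t, P z t = 1) (hβ : 0 ≤ β) (z₀ : Z) (p : PosProbVec T) :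
    skillObjective q P β (fun t => β * log (P z₀ t / q t)) p
      ≤ -β * ∑ t, P z₀ t * log (P z₀ t / q t) := by
  obtain ⟨p, hp, hps⟩ := p
  have hreward : β * ∑ t, P z₀ t * log (P z₀ t / q t)
      ≤ ⨆ z, ∑ t, P z t * (β * log (P z₀ t / q t)) := by
    refine le_ciSup_of_le (Set.finite_range _).bddAbove z₀ (le_of_eq ?_)
    simp only [mul_sum]
    exact sum_congr rfl fun t _ => by ring
  have hfirst : ∑ t, p t * (β * log (P z₀ t / q t)) = β * ∑ t, p t * log (P z₀ t / q t) := by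
    simp only [mul_sum]
    exact sum_congr rfl fun t _ => by ring
  have hshift := sum_mul_log_div_sub_sum_mul_log_div p (P z₀) q hp (hP z₀) hq
  have hgibbs := sum_mul_log_div_nonneg p (P z₀) (fun t => (hp t).le) (hP z₀) (by rw [hps, hPs])
  simp only [skillObjective]
  rw [hfirst]
  nlinarith [mul_nonneg hβ hgibbs]

end Objective

theorem skill_minmax_eq_neg_beta_sup_KL_general {T Z : Type*}
    [Fintype T] [Fintype Z] [Nonempty Z]
    (q : T → ℝ) (hq : ∀ t, 0 < q t)
    (P : Z → T → ℝ) (hP : ∀ z t, 0 < P z t) (hPs : ∀ z, ∑ t, P z t = 1)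
    (β : ℝ) (hβ : 0 < β) :
    (⨅ r : T → ℝ, ⨆ p' : {f : T → ℝ // (∀ t, 0 < f t) ∧ ∑ t, f t = 1},
      (∑ t, (p' : T → ℝ) t * r t - (⨆ z, ∑ t, P z t * r t)
        - β * ∑ t, (p' : T → ℝ) t * Real.log ((p' : T → ℝ) t / q t)))
    = -β * ⨆ z, ∑ t, P z t * Real.log (P z t / q t) := by
  change ⨅ r : T → ℝ, ⨆ p : PosProbVec T, skillObjective q P β r p = _
  have : Nonempty (PosProbVec T) :=
    ⟨⟨P (Classical.arbitrary Z), hP _, hPs _⟩⟩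
  have hlower := neg_mul_sup_kl_le_sup_skillObjective hq hP hPs hβ.le
  obtain ⟨z₀, hz₀⟩ :=
    exists_eq_ciSup_of_finite (f := fun z => ∑ t, P z t * log (P z t / q t))
  refine le_antisymm ?_ (le_ciInf hlower)
  calc ⨅ r : T → ℝ, ⨆ p : PosProbVec T, skillObjective q P β r p
      ≤ ⨆ p : PosProbVec T, skillObjective q P β (fun t => β * log (P z₀ t / q t)) p :=
        ciInf_le ⟨_, Set.forall_mem_range.2 hlower⟩ _
    _ ≤ -β * ∑ t, P z₀ t * log (P z₀ t / q t) :=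
        ciSup_le (skillObjective_log_ratio_le hq hP hPs hβ.le z₀)
    _ = -β * ⨆ z, ∑ t, P z t * log (P z t / q t) := by rw [hz₀]

/-- Core min–max identity for the skill-based adaptation objective: the min over
rewards of the max over fine-tuned distributions of the skill-based objective equals
`−β` times the maximal KL divergence of a skill-conditioned distribution from `q`. -/
theorem skill_minmax_eq_neg_beta_sup_KL {T Z : Type*}
    [Fintype T] [Nonempty T] [Fintype Z] [Nonempty Z]
    (q : T → ℝ) (hq : ∀ t, 0 < q t) (hqs : ∑ t, q t = 1)
    (P : Z → T → ℝ) (hP : ∀ z t, 0 < P z t) (hPs : ∀ z, ∑ t, P z t = 1)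
    (β : ℝ) (hβ : 0 < β) :
    (⨅ r : T → ℝ, ⨆ p' : {f : T → ℝ // (∀ t, 0 < f t) ∧ ∑ t, f t = 1},
      (∑ t, (p' : T → ℝ) t * r t - (⨆ z, ∑ t, P z t * r t)
        - β * ∑ t, (p' : T → ℝ) t * Real.log ((p' : T → ℝ) t / q t)))
    = -β * ⨆ z, ∑ t, P z t * Real.log (P z t / q t) :=
  skill_minmax_eq_neg_beta_sup_KL_general q hq P hP hPs β hβ
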